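/- (Verification by Lagrangian duality) Let ξ_T be a positive random variable on a probability space, η_T ≥ 0 a density of a measure P̃ w.r.t. P, λ₁, λ₂ ≥ 0, and suppose X* is a random variable such that almost surely X* maximizes x ↦ U(x) − λ₁ ξ_T x + λ₂ η_T 1_{x ≥ L} over x > 0, and X* satisfies E[ξ_T X*] = x₀ and P̃(X* ≥ L) = 1 − β. Then for any random variable X > 0 with E[ξ_T X] ≤ x₀ and P̃(X ≥ L) ≥ 1 − β, it holds E[U(X*)] ≥ E[U(X)], provided all expectations exist and are finite. -/
import Mathlib


open Real MeasureTheory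

/-- Verification by Lagrangian duality. If `X*` pointwise a.s.
maximizes the Lagrangian and is tight in both constraints, then it maximizes
expected utility among all admissible wealths. -/
theorem verification_lagrangian_duality
    {Ω : Type*} [MeasurableSpace Ω] (P : Measure Ω) [IsProbabilityMeasure P]
    (U : ℝ → ℝ) (ξT ηT Xstar X : Ω → ℝ)
    (L x₀ β lam1 lam2 : ℝ) (hL : 0 < L)
    (hξpos : ∀ᵐ ω ∂P, 0 < ξT ω) (hηnonneg : ∀ᵐ ω ∂P, 0 ≤ ηT ω)
    (hηdens : ∫ ω, ηT ω ∂P = 1)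
    (hlam1 : 0 ≤ lam1) (hlam2 : 0 ≤ lam2)
    (hXstarpos : ∀ᵐ ω ∂P, 0 < Xstar ω) (hXpos : ∀ᵐ ω ∂P, 0 < X ω)
    -- integrability of everything involved
    (hint1 : Integrable (fun ω => U (Xstar ω)) P)
    (hint2 : Integrable (fun ω => U (X ω)) P)
    (hint3 : Integrable (fun ω => ξT ω * Xstar ω) P)
    (hint4 : Integrable (fun ω => ξT ω * X ω) P)
    (hint5 : Integrable (fun ω => ηT ω * (if L ≤ Xstar ω then (1:ℝ) else 0)) P)
    (hint6 : Integrable (fun ω => ηT ω * (if L ≤ X ω then (1:ℝ) else 0)) P)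
    -- X* a.s. maximizes the pointwise Lagrangian over x > 0
    (hmax : ∀ᵐ ω ∂P, ∀ x > 0,
      U x - lam1 * ξT ω * x + lam2 * ηT ω * (if L ≤ x then (1:ℝ) else 0) ≤
      U (Xstar ω) - lam1 * ξT ω * Xstar ω
        + lam2 * ηT ω * (if L ≤ Xstar ω then (1:ℝ) else 0))
    -- binding constraints for X*
    (hbudgetstar : ∫ ω, ξT ω * Xstar ω ∂P = x₀)
    (hprobstar : ∫ ω, ηT ω * (if L ≤ Xstar ω then (1:ℝ) else 0) ∂P = 1 - β)
    -- admissibility of X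
    (hbudget : ∫ ω, ξT ω * X ω ∂P ≤ x₀)
    (hprob : 1 - β ≤ ∫ ω, ηT ω * (if L ≤ X ω then (1:ℝ) else 0) ∂P) :
    ∫ ω, U (X ω) ∂P ≤ ∫ ω, U (Xstar ω) ∂P := by
  have hLag : ∫ ω, (U (X ω) - lam1 * (ξT ω * X ω)
        + lam2 * (ηT ω * (if L ≤ X ω then (1:ℝ) else 0))) ∂P ≤
      ∫ ω, (U (Xstar ω) - lam1 * (ξT ω * Xstar ω)
        + lam2 * (ηT ω * (if L ≤ Xstar ω then (1:ℝ) else 0))) ∂P := by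
    refine integral_mono_ae ((hint2.sub (hint4.const_mul lam1)).add (hint6.const_mul lam2))
      ((hint1.sub (hint3.const_mul lam1)).add (hint5.const_mul lam2)) ?_
    filter_upwards [hmax, hXpos] with ω h hx
    have := h (X ω) hx
    ring_nf at this ⊢
    linarith
  have eX : ∫ ω, (U (X ω) - lam1 * (ξT ω * X ω)
        + lam2 * (ηT ω * (if L ≤ X ω then (1:ℝ) else 0))) ∂P
      = (∫ ω, U (X ω) ∂P) - lam1 * (∫ ω, ξT ω * X ω ∂P)
        + lam2 * (∫ ω, ηT ω * (if L ≤ X ω then (1:ℝ) else 0) ∂P) := by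
    rw [integral_add, integral_sub hint2 (hint4.const_mul lam1),
      integral_const_mul, integral_const_mul]
    exacts [hint2.sub (hint4.const_mul lam1), hint6.const_mul lam2]
  have eS : ∫ ω, (U (Xstar ω) - lam1 * (ξT ω * Xstar ω)
        + lam2 * (ηT ω * (if L ≤ Xstar ω then (1:ℝ) else 0))) ∂P
      = (∫ ω, U (Xstar ω) ∂P) - lam1 * (∫ ω, ξT ω * Xstar ω ∂P)
        + lam2 * (∫ ω, ηT ω * (if L ≤ Xstar ω then (1:ℝ) else 0) ∂P) := by
    rw [integral_add, integral_sub hint1 (hint3.const_mul lam1),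
      integral_const_mul, integral_const_mul]
    exacts [hint1.sub (hint3.const_mul lam1), hint5.const_mul lam2]
  rw [eX, eS, hbudgetstar, hprobstar] at hLag
  have h1 : lam1 * ∫ ω, ξT ω * X ω ∂P ≤ lam1 * x₀ := mul_le_mul_of_nonneg_left hbudget hlam1
  have h2 : lam2 * (1 - β) ≤ lam2 * ∫ ω, ηT ω * (if L ≤ X ω then (1:ℝ) else 0) ∂P :=
    mul_le_mul_of_nonneg_left hprob hlam2
  linarith
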